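/- arXiv:2212.09148 — 5 statements merged into one kernel-verified Lean document; each statement's English description precedes it below -/
import Mathlib

section
/- Let p_n^k ⊂ gl_n be the subspace of matrices X with x_{ij} = 0 whenever i ≤ k or j ≥ n−k+1. If f is a polynomial in the matrix entries x_{ij} belonging to the Poisson center of S(p_n^{k−1}) (i.e. Poisson-commuting with all of S(p_n^{k-1})) with respect to the bracket {x_{ij},x_{kl}} = δ_{jk}x_{il} − δ_{li}x_{kj}, then for any g ∈ S(p_n^k), the partial derivative ∂f/∂x_{k,n−k+1} Poisson-commutes with g. -/
/-
Differentiate the identity `{f, g} = 0` with respect to `x_{ab}`, where `(a, b) = (k-1, n-k)`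
is the corner of `p_n^{k-1}` not in `p_n^k`. Because the bracket has linear coefficients,
`∂_{ab}{f, g} = {∂_{ab} f, g} + {f, ∂_{ab} g} + ∑_j (∂_{aj} f ∂_{jb} g − ∂_{jb} f ∂_{aj} g)`.
For `g ∈ S(p_n^k)` every derivative of `g` along row `a` or column `b` vanishes, so only
`{∂_{ab} f, g}` survives.
-/

open MvPolynomial

/-- The Kirillov–Kostant Poisson bracket on polynomials in the matrix entries `x_{ij}`,
determined by `{x_{ij}, x_{kl}} = δ_{jk} x_{il} − δ_{li} x_{kj}` and the Leibniz rule. -/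
noncomputable def pb {n : ℕ} (f g : MvPolynomial (Fin n × Fin n) ℝ) :
    MvPolynomial (Fin n × Fin n) ℝ :=
  ∑ i : Fin n, ∑ j : Fin n, ∑ k : Fin n, ∑ l : Fin n,
    ((if j = k then X (i, l) else 0) - (if l = i then X (k, j) else 0)) *
      (pderiv (i, j) f) * (pderiv (k, l) g)

/-- The set of matrix positions of the subalgebra `p_n^k ⊂ gl_n` (0-indexed: rows `≥ k`,
columns `< n − k`; i.e. the first `k` rows and the last `k` columns vanish). -/
def pSet (n k : ℕ) : Set (Fin n × Fin n) :=
  {p : Fin n × Fin n | k ≤ p.1.val ∧ p.2.val < n - k}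

theorem MvPolynomial.pderiv_comm {R σ : Type*} [CommRing R] (i j : σ) (f : MvPolynomial σ R) :
    pderiv i (pderiv j f) = pderiv j (pderiv i f) := by
  -- the commutator of two derivations is a derivation, and this one kills every variable
  have h : ⁅pderiv i, pderiv j⁆ = (0 : Derivation R (MvPolynomial σ R) (MvPolynomial σ R)) :=
    derivation_ext fun k => by
      rw [Derivation.commutator_apply]
      classical simp [pderiv_X, Pi.single_apply, apply_ite]
  rw [← sub_eq_zero, ← Derivation.commutator_apply, h, Derivation.zero_apply]

theorem MvPolynomial.pderiv_eq_zero_of_mem_supported {R σ : Type*} [CommSemiring R] {s : Set σ}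
    {g : MvPolynomial σ R} (hg : g ∈ supported R s) {v : σ} (hv : v ∉ s) : pderiv v g = 0 :=
  pderiv_eq_zero_of_notMem_vars fun hmem => hv (mem_supported.mp hg hmem)

theorem pSet_antitone (n : ℕ) : Antitone (pSet n) :=
  fun _ _ hkk' _ hp => ⟨hkk'.trans hp.1, hp.2.trans_le (Nat.sub_le_sub_left hkk' n)⟩

@[simp]
theorem pb_zero_right {n : ℕ} (f : MvPolynomial (Fin n × Fin n) ℝ) : pb f 0 = 0 := by
  simp [pb]

theorem pderiv_pb {n : ℕ} (a b : Fin n) (f g : MvPolynomial (Fin n × Fin n) ℝ) :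
    pderiv (a, b) (pb f g) = pb (pderiv (a, b) f) g + pb f (pderiv (a, b) g) +
      ∑ j, (pderiv (a, j) f * pderiv (j, b) g - pderiv (j, b) f * pderiv (a, j) g) := by
  have hmul : ∀ c p q : MvPolynomial (Fin n × Fin n) ℝ, pderiv (a, b) (c * p * q) =
      c * pderiv (a, b) p * q + c * p * pderiv (a, b) q + pderiv (a, b) c * p * q :=
    fun c p q => by simp only [pderiv_mul]; ring
  have hX : ∀ i l : Fin n, pderiv (a, b) (X (i, l) : MvPolynomial (Fin n × Fin n) ℝ) =
      if i = a ∧ l = b then 1 else 0 := fun i l => by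
    simp [pderiv_X, Pi.single_apply, Prod.ext_iff]
  simp only [pb, map_sum, hmul, Finset.sum_add_distrib, pderiv_comm (a, b)]
  congr 1
  simp [hX, apply_ite (pderiv (a, b)), sub_mul, Finset.sum_sub_distrib, ite_and, ite_mul,
    Finset.sum_ite_eq, Finset.sum_ite_eq']

/-- If `f` lies in `S(p_n^{k−1})` and Poisson-commutes with all of `S(p_n^{k−1})`, then
`∂f/∂x_{k,n−k+1}` (0-indexed: `∂f/∂x_{k−1,n−k}`) Poisson-commutes with every
`g ∈ S(p_n^k)`. -/
theorem stmt4 {n k : ℕ} (hk : 1 ≤ k) (hkn : k ≤ n)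
    (f : MvPolynomial (Fin n × Fin n) ℝ)
    (hcen : ∀ h ∈ MvPolynomial.supported ℝ (pSet n (k - 1)), pb f h = 0)
    (g : MvPolynomial (Fin n × Fin n) ℝ)
    (hg : g ∈ MvPolynomial.supported ℝ (pSet n k)) :
    pb (pderiv ((⟨k - 1, by omega⟩ : Fin n), (⟨n - k, by omega⟩ : Fin n)) f) g = 0 := by
  set a : Fin n := ⟨k - 1, by omega⟩
  set b : Fin n := ⟨n - k, by omega⟩
  have hrow : ∀ j, pderiv (a, j) g = 0 := fun j =>
    pderiv_eq_zero_of_mem_supported hg fun hj => (Nat.sub_lt hk Nat.one_pos).not_ge hj.1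
  have hcol : ∀ j, pderiv (j, b) g = 0 := fun j =>
    pderiv_eq_zero_of_mem_supported hg fun hj => lt_irrefl (n - k) hj.2
  have hfg : pb f g = 0 := hcen g (supported_mono (pSet_antitone n (Nat.sub_le k 1)) hg)
  simpa [pderiv_pb, hrow, hcol] using congrArg (pderiv (a, b)) hfg
end

section
/- Let D_k = ∂/∂x_{1,n} ∘ ∂/∂x_{2,n−1} ∘ … ∘ ∂/∂x_{k,n−k+1} act on polynomials in matrix entries x_{ij}, and let E_i be the coefficients of the characteristic polynomial of the matrix X = (x_{ij}): det(X − λ·1) = Σ_i (−1)^{n−i} λ^{n−i} E_i. Then for all k, i, the polynomial D_k(E_i) depends only on the variables x_{pq} with p > k and q ≤ n−k, i.e. D_k(E_i) ∈ S(p_n^k). -/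
open MvPolynomial

/-- The operator `D_k = ∂/∂x_{1,n} ∘ ∂/∂x_{2,n−1} ∘ … ∘ ∂/∂x_{k,n−k+1}`
(0-indexed positions `(ℓ, n−1−ℓ)`, `ℓ = 0,…,k−1`). -/
noncomputable def Dk {n : ℕ} :
    (k : ℕ) → k ≤ n → MvPolynomial (Fin n × Fin n) ℝ → MvPolynomial (Fin n × Fin n) ℝ
  | 0, _, f => f
  | k + 1, hk, f =>
      pderiv ((⟨k, by omega⟩ : Fin n), (⟨n - k - 1, by omega⟩ : Fin n)) (Dk k (by omega) f)

section Aux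

variable {n : ℕ}

/-- The key invariant: every monomial of the polynomial picks positions along the graph of a
permutation (so at most one variable per row and per column, each with exponent 1), and all
its variables lie in rows `≥ j` and columns `< n − j`. -/
def GoodAt (n j : ℕ) (m : (Fin n × Fin n) →₀ ℕ) : Prop :=
  ∃ σ : Equiv.Perm (Fin n), ∀ p : Fin n × Fin n, m p ≠ 0 →
    p.1 = σ p.2 ∧ m p = 1 ∧ j ≤ p.1.val ∧ p.2.val < n - j

lemma entry_support_aux (p q : Fin n) (d : ℕ)
    (m : (Fin n × Fin n) →₀ ℕ)
    (hm : m ∈ (((Polynomial.C (X (p, q) : MvPolynomial (Fin n × Fin n) ℝ) -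
        if p = q then Polynomial.X else 0)).coeff d).support) :
    m = Finsupp.single (p, q) 1 ∨ m = 0 := by
  rw [Polynomial.coeff_sub] at hm
  have hm' := MvPolynomial.support_sub _ _ _ hm
  rcases Finset.mem_union.1 hm' with h | h
  · left
    rw [Polynomial.coeff_C] at h
    split_ifs at h with hd
    · rw [MvPolynomial.support_X] at h
      simpa using h
    · simp at h
  · right
    split_ifs at h with hpq
    · rw [Polynomial.coeff_X] at h
      split_ifs at h with hd
      · have : (1 : MvPolynomial (Fin n × Fin n) ℝ) = monomial 0 1 := by
          simp [MvPolynomial.monomial_zero']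
        rw [this, MvPolynomial.support_monomial] at h
        simp at h
        exact h
      · simp at h
    · simp at h

lemma prod_support_aux (σ : Equiv.Perm (Fin n))
    (M : Matrix (Fin n) (Fin n) (Polynomial (MvPolynomial (Fin n × Fin n) ℝ)))
    (hM : ∀ p q, M p q = Polynomial.C (X (p, q)) - (if p = q then Polynomial.X else 0)) :
    ∀ (s : Finset (Fin n)) (d : ℕ) (m : (Fin n × Fin n) →₀ ℕ),
      m ∈ ((∏ j ∈ s, M (σ j) j).coeff d).support →
      ∀ p : Fin n × Fin n, m p ≠ 0 → p.1 = σ p.2 ∧ p.2 ∈ s ∧ m p = 1 := by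
  intro s
  induction s using Finset.induction with
  | empty =>
    intro d m hm p hp
    rw [Finset.prod_empty] at hm
    rw [Polynomial.coeff_one] at hm
    exfalso
    split_ifs at hm with hd
    · have : (1 : MvPolynomial (Fin n × Fin n) ℝ) = monomial 0 1 := by
        simp [MvPolynomial.monomial_zero']
      rw [this, MvPolynomial.support_monomial] at hm
      simp at hm
      subst hm
      simp at hp
    · simp at hm
  | @insert a s ha ih =>
    intro d m hm p hp
    rw [Finset.prod_insert ha, Polynomial.coeff_mul] at hm
    have hm' := MvPolynomial.support_sum hm
    rw [Finset.mem_biUnion] at hm'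
    obtain ⟨⟨e₁, e₂⟩, _, hmem⟩ := hm'
    have hmul := MvPolynomial.support_mul _ _ hmem
    rw [Finset.mem_add] at hmul
    obtain ⟨m₁, h₁, m₂, h₂, hsum⟩ := hmul
    rw [hM] at h₁
    have h1cases := entry_support_aux (σ a) a e₁ m₁ h₁
    have h2 := ih e₂ m₂ h₂
    subst hsum
    have hp1 : m₁ p ≠ 0 ∨ m₂ p ≠ 0 := by
      by_contra hc
      push_neg at hc
      simp [Finsupp.add_apply, hc.1, hc.2] at hp
    rcases hp1 with h | h
    · -- m₁ p ≠ 0, so m₁ = single (σ a, a) 1 and p = (σ a, a)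
      rcases h1cases with h1 | h1
      · subst h1
        have hpv : p = (σ a, a) := by
          by_contra hne
          rw [Finsupp.single_apply_eq_zero.2 (fun hh => absurd hh hne)] at h
          exact h rfl
        subst hpv
        have hm2 : m₂ (σ a, a) = 0 := by
          by_contra hc
          obtain ⟨_, hmem2, _⟩ := h2 _ hc
          exact ha hmem2
        refine ⟨rfl, Finset.mem_insert_self _ _, ?_⟩
        simp [Finsupp.add_apply, hm2, Finsupp.single_apply]
      · subst h1; simp at h
    · obtain ⟨hσ, hmem2, hone⟩ := h2 p h
      have hm1 : m₁ p = 0 := by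
        rcases h1cases with h1 | h1
        · subst h1
          rw [Finsupp.single_apply_eq_zero]
          intro hpv
          exfalso
          apply ha
          have : p.2 = a := by rw [hpv]
          rwa [← this]
        · subst h1; rfl
      exact ⟨hσ, Finset.mem_insert_of_mem hmem2, by simp [Finsupp.add_apply, hm1, hone]⟩

lemma det_coeff_support (M : Matrix (Fin n) (Fin n) (Polynomial (MvPolynomial (Fin n × Fin n) ℝ)))
    (hM : ∀ p q, M p q = Polynomial.C (X (p, q)) - (if p = q then Polynomial.X else 0))
    (d : ℕ) (m : (Fin n × Fin n) →₀ ℕ) (hm : m ∈ (M.det.coeff d).support) :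
    GoodAt n 0 m := by
  rw [Matrix.det_apply, Polynomial.finset_sum_coeff] at hm
  have hm' := MvPolynomial.support_sum hm
  rw [Finset.mem_biUnion] at hm'
  obtain ⟨σ, _, hmem⟩ := hm'
  rw [Polynomial.coeff_smul] at hmem
  have hmem' := MvPolynomial.support_smul hmem
  refine ⟨σ, fun p hp => ?_⟩
  obtain ⟨hσ, _, hone⟩ := prod_support_aux σ M hM Finset.univ d m hmem' p hp
  exact ⟨hσ, hone, Nat.zero_le _, by omega⟩

lemma pderiv_support (v : Fin n × Fin n) (f : MvPolynomial (Fin n × Fin n) ℝ)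
    (m' : (Fin n × Fin n) →₀ ℕ) (hm' : m' ∈ (pderiv v f).support) :
    ∃ m ∈ f.support, m v ≠ 0 ∧ m' = m - Finsupp.single v 1 := by
  conv at hm' => rw [MvPolynomial.as_sum f, map_sum]
  have h := MvPolynomial.support_sum hm'
  rw [Finset.mem_biUnion] at h
  obtain ⟨m, hmf, hmem⟩ := h
  rw [MvPolynomial.pderiv_monomial] at hmem
  classical
  rw [MvPolynomial.support_monomial] at hmem
  split_ifs at hmem with hc
  · simp at hmem
  · refine ⟨m, hmf, ?_, by simpa using hmem⟩
    intro hv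
    apply hc
    rw [hv]
    simp

lemma goodAt_step (j : ℕ) (hj : j < n) (f : MvPolynomial (Fin n × Fin n) ℝ)
    (hf : ∀ m ∈ f.support, GoodAt n j m) :
    ∀ m ∈ (pderiv ((⟨j, by omega⟩ : Fin n), (⟨n - j - 1, by omega⟩ : Fin n)) f).support,
      GoodAt n (j + 1) m := by
  intro m' hm'
  set v : Fin n × Fin n := ((⟨j, by omega⟩ : Fin n), (⟨n - j - 1, by omega⟩ : Fin n)) with hv
  obtain ⟨m, hmf, hmv, heq⟩ := pderiv_support v f m' hm'
  obtain ⟨σ, hσ⟩ := hf m hmf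
  obtain ⟨hσv, hmv1, _, _⟩ := hσ v hmv
  refine ⟨σ, fun p hp => ?_⟩
  have hp' : m' p = m p - (Finsupp.single v 1) p := by rw [heq, Finsupp.tsub_apply]
  have hpv : p ≠ v := by
    intro h
    subst h
    rw [hp', Finsupp.single_apply] at hp
    simp [hmv1] at hp
  have hmp : m p ≠ 0 := by
    intro h
    rw [hp', h] at hp
    simp at hp
  obtain ⟨h1, h2, h3, h4⟩ := hσ p hmp
  have hps : (Finsupp.single v 1) p = 0 :=
    Finsupp.single_apply_eq_zero.2 (fun hh => absurd hh hpv)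
  have hm'p : m' p = m p := by rw [hp', hps]; omega
  -- p.2 ≠ v.2 : otherwise p = v since p.1 = σ p.2 = σ v.2 = v.1
  have hp2 : p.2 ≠ v.2 := by
    intro h
    apply hpv
    have : p.1 = v.1 := by rw [h1, h, ← hσv]
    exact Prod.ext this h
  have hp1 : p.1 ≠ v.1 := by
    intro h
    apply hp2
    apply σ.injective
    rw [← h1, h, hσv]
  have hv1 : v.1.val = j := rfl
  have hv2 : v.2.val = n - j - 1 := rfl
  have hne1 : p.1.val ≠ j := by
    intro h; apply hp1; exact Fin.ext (by rw [h, hv1])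
  have hne2 : p.2.val ≠ n - j - 1 := by
    intro h; apply hp2; exact Fin.ext (by rw [h, hv2])
  exact ⟨h1, by rw [hm'p]; exact h2, by omega, by omega⟩

lemma goodAt_Dk (k : ℕ) (hk : k ≤ n) (f : MvPolynomial (Fin n × Fin n) ℝ)
    (hf : ∀ m ∈ f.support, GoodAt n 0 m) :
    ∀ m ∈ (Dk k hk f).support, GoodAt n k m := by
  induction k with
  | zero => exact hf
  | succ k ih =>
    show ∀ m ∈ (pderiv _ (Dk k (by omega) f)).support, GoodAt n (k + 1) m
    exact goodAt_step k (by omega) _ (ih (by omega))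

end Aux

/-- `D_k(E_i)` depends only on the variables `x_{pq}` with `p > k` and `q ≤ n−k`, i.e.
`D_k(E_i) ∈ S(p_n^k)`, where the `E_i` are the characteristic polynomial coefficients of
the matrix of variables. -/
theorem stmt5 {n k : ℕ} (hk : k ≤ n)
    (L : Matrix (Fin n) (Fin n) (MvPolynomial (Fin n × Fin n) ℝ))
    (hL : ∀ i j, L i j = X (i, j))
    (E : ℕ → MvPolynomial (Fin n × Fin n) ℝ)
    (hE : (L.map Polynomial.C -
        (Polynomial.X : Polynomial (MvPolynomial (Fin n × Fin n) ℝ)) •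
          (1 : Matrix (Fin n) (Fin n) (Polynomial (MvPolynomial (Fin n × Fin n) ℝ)))).det
      = ∑ i ∈ Finset.range (n + 1),
          (-1 : Polynomial (MvPolynomial (Fin n × Fin n) ℝ)) ^ (n - i) *
            Polynomial.X ^ (n - i) * Polynomial.C (E i)) :
    ∀ i ≤ n, Dk k hk (E i) ∈ MvPolynomial.supported ℝ (pSet n k) := by
  intro i hi
  set M : Matrix (Fin n) (Fin n) (Polynomial (MvPolynomial (Fin n × Fin n) ℝ)) :=
    L.map Polynomial.C - (Polynomial.X : Polynomial (MvPolynomial (Fin n × Fin n) ℝ)) •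
      (1 : Matrix (Fin n) (Fin n) (Polynomial (MvPolynomial (Fin n × Fin n) ℝ))) with hMdef
  have hM : ∀ p q, M p q = Polynomial.C (X (p, q)) - (if p = q then Polynomial.X else 0) := by
    intro p q
    simp [hMdef, Matrix.sub_apply, Matrix.map_apply, hL, Matrix.smul_apply, Matrix.one_apply,
      smul_ite]
  -- extract E i from hE via coefficient at n - i
  have hcoeff : M.det.coeff (n - i) = (-1 : MvPolynomial (Fin n × Fin n) ℝ) ^ (n - i) * E i := by
    rw [hE, Polynomial.finset_sum_coeff]
    have : ∀ i' ∈ Finset.range (n + 1),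
        ((-1 : Polynomial (MvPolynomial (Fin n × Fin n) ℝ)) ^ (n - i') *
          Polynomial.X ^ (n - i') * Polynomial.C (E i')).coeff (n - i)
        = if i' = i then (-1 : MvPolynomial (Fin n × Fin n) ℝ) ^ (n - i) * E i else 0 := by
      intro i' hi'
      rw [Finset.mem_range] at hi'
      have hrw : ((-1 : Polynomial (MvPolynomial (Fin n × Fin n) ℝ)) ^ (n - i') *
          Polynomial.X ^ (n - i') * Polynomial.C (E i'))
          = Polynomial.C ((-1 : MvPolynomial (Fin n × Fin n) ℝ) ^ (n - i') * E i') *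
            Polynomial.X ^ (n - i') := by
        rw [map_mul, map_pow, map_neg, map_one]
        ring
      rw [hrw, Polynomial.coeff_C_mul, Polynomial.coeff_X_pow]
      split_ifs with h1 h2 h2
      · subst h2; simp
      · exfalso; apply h2; omega
      · exfalso; apply h1; subst h2; rfl
      · simp
    rw [Finset.sum_congr rfl this, Finset.sum_ite_eq' (Finset.range (n + 1))]
    simp [Nat.lt_succ_of_le hi]
  have hsupp : (E i).support ⊆ (M.det.coeff (n - i)).support := by
    have h2 : (-1 : MvPolynomial (Fin n × Fin n) ℝ) ^ (n - i) *
        ((-1 : MvPolynomial (Fin n × Fin n) ℝ) ^ (n - i) * E i) = E i := by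
      rw [← mul_assoc, ← pow_add, Even.neg_one_pow ⟨n - i, rfl⟩, one_mul]
    intro m hm
    rw [hcoeff]
    have : E i = (-1 : MvPolynomial (Fin n × Fin n) ℝ) ^ (n - i) *
        ((-1 : MvPolynomial (Fin n × Fin n) ℝ) ^ (n - i) * E i) := h2.symm
    rcases Nat.even_or_odd (n - i) with he | ho
    · rwa [he.neg_one_pow, one_mul]
    · rw [ho.neg_one_pow, neg_one_mul, MvPolynomial.support_neg]
      exact hm
  have hgood : ∀ m ∈ (E i).support, GoodAt n 0 m := by
    intro m hm
    exact det_coeff_support M hM (n - i) m (hsupp hm)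
  have hDk := goodAt_Dk k hk (E i) hgood
  rw [MvPolynomial.mem_supported]
  intro v hv
  rw [Finset.mem_coe, MvPolynomial.mem_vars] at hv
  obtain ⟨m, hm, hvm⟩ := hv
  obtain ⟨σ, hσ⟩ := hDk m hm
  rw [Finsupp.mem_support_iff] at hvm
  obtain ⟨_, _, h3, h4⟩ := hσ v hvm
  exact ⟨h3, h4⟩
end

section
/- Let τ: Symm_n → gl_n be a smooth map satisfying the equivariance τ(Q L Qᵀ) = Q τ(L) Qᵀ for all orthogonal Q in a fixed closed subgroup G ⊆ SO_n, and suppose exp(t τ(L₀)) ∈ B₋ · G for all t (where B₋ is the group of invertible lower-triangular matrices), with decomposition exp(t τ(L₀)) = R(t) Q(t), R(t) ∈ B₋, Q(t) ∈ G. Then L(t) = Q(t) L₀ Q(t)⁻¹ solves the Lax equation dL/dt = [M(τ(L)), L] with L(0) = L₀, where M is the projection of gl_n onto so_n along lower-triangular matrices. -/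
/-!
Differentiating `exp (t • A) = R t * Q t` gives `R' Q + R Q' = R Q A`, hence
`Q A Qᵀ = R⁻¹ R' + Q' Qᵀ`. The first summand is lower triangular and the second is skew-symmetric
(differentiate `Q Qᵀ = 1`), so `Mproj (Q A Qᵀ) = Q' Qᵀ`. By equivariance `Q A Qᵀ = τ (Q L₀ Qᵀ)`, and
the derivative of `L = Q L₀ Qᵀ` is `Q' L₀ Qᵀ + Q L₀ Q'ᵀ = [Q' Qᵀ, L]`.
-/

/-- The projection of `gl_n` onto skew-symmetric matrices along lower-triangular matrices. -/
def Mproj {n : ℕ} (X : Matrix (Fin n) (Fin n) ℝ) : Matrix (Fin n) (Fin n) ℝ :=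
  Matrix.of fun i j => if i < j then X i j else if j < i then -X j i else 0

open Matrix

theorem Mproj_add_of_isLowerTriangular {n : ℕ} {T S : Matrix (Fin n) (Fin n) ℝ}
    (hT : T.IsLowerTriangular) (hS : Sᵀ = -S) : Mproj (T + S) = S := by
  have hS' : ∀ i j, S j i = -S i j := fun i j => by simpa using congrFun (congrFun hS i) j
  ext i j
  rcases lt_trichotomy i j with h | rfl | h
  · simp [Mproj, h, hT h]
  · simp only [Mproj, lt_self_iff_false, if_false, of_apply]
    linarith [hS' i i]
  · simp [Mproj, h, h.not_gt, hT h, hS' i j]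

theorem conj_eq_inv_mul_add_mul_transpose {m α : Type*} [Fintype m] [DecidableEq m] [CommRing α]
    {R Q R' Q' A : Matrix m m α} (hQ : Q * Qᵀ = 1) (hR : IsUnit R.det)
    (h : R' * Q + R * Q' = R * Q * A) : Q * A * Qᵀ = R⁻¹ * R' + Q' * Qᵀ :=
  calc Q * A * Qᵀ = R⁻¹ * (R * Q * A) * Qᵀ := by
        rw [Matrix.mul_assoc R, ← Matrix.mul_assoc R⁻¹, nonsing_inv_mul _ hR, Matrix.one_mul]
    _ = R⁻¹ * R' + Q' * Qᵀ := by
        rw [← h, Matrix.mul_add, Matrix.add_mul, ← Matrix.mul_assoc R⁻¹ R, nonsing_inv_mul _ hR,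
          Matrix.one_mul, Matrix.mul_assoc, Matrix.mul_assoc, hQ, Matrix.mul_one]

open scoped Matrix.Norms.Operator in
theorem hasDerivAt_exp_smul_matrix_apply {𝕜 m : Type*} [RCLike 𝕜] [Fintype m] [DecidableEq m]
    (A : Matrix m m 𝕜) (t : 𝕜) (i j : m) :
    HasDerivAt (fun s : 𝕜 => NormedSpace.exp (s • A) i j) ((NormedSpace.exp (t • A) * A) i j) t :=
  (entryLinearMap 𝕜 𝕜 i j).toContinuousLinearMap.hasFDerivAt.comp_hasDerivAt t
    (hasDerivAt_exp_smul_const A t)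

section Derivatives

open scoped Matrix.Norms.Elementwise

variable {𝕜 m n : Type*} [NontriviallyNormedField 𝕜] {t : 𝕜}

theorem hasDerivAt_matrix_iff [Fintype n] {f : 𝕜 → Matrix m n 𝕜} {f' : Matrix m n 𝕜} :
    HasDerivAt f f' t ↔ ∀ i j, HasDerivAt (fun s => f s i j) (f' i j) t :=
  hasDerivAt_pi.trans (forall_congr' fun _ => hasDerivAt_pi)

theorem HasDerivAt.matrix_transpose [Fintype m] [Fintype n] {f : 𝕜 → Matrix m n 𝕜}
    {f' : Matrix m n 𝕜} (h : HasDerivAt f f' t) : HasDerivAt (fun s => (f s)ᵀ) f'ᵀ t :=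
  hasDerivAt_matrix_iff.2 fun i j => hasDerivAt_matrix_iff.1 h j i

theorem HasDerivAt.matrix_mul {p : Type*} [Fintype n] [Fintype p] {A : 𝕜 → Matrix m n 𝕜}
    {B : 𝕜 → Matrix n p 𝕜} {A' : Matrix m n 𝕜} {B' : Matrix n p 𝕜}
    (hA : HasDerivAt A A' t) (hB : HasDerivAt B B' t) :
    HasDerivAt (fun s => A s * B s) (A' * B t + A t * B') t :=
  hasDerivAt_matrix_iff.2 fun i j => by
    simp only [mul_apply, Matrix.add_apply, ← Finset.sum_add_distrib]
    exact HasDerivAt.fun_sum fun k _ =>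
      (hasDerivAt_matrix_iff.1 hA i k).mul (hasDerivAt_matrix_iff.1 hB k j)

theorem HasDerivAt.blockTriangular [Fintype m] {α : Type*} [LT α] {b : m → α}
    {f : 𝕜 → Matrix m m 𝕜} {f' : Matrix m m 𝕜} (h : HasDerivAt f f' t)
    (hf : ∀ s, (f s).BlockTriangular b) : f'.BlockTriangular b := fun i j hij =>
  (hasDerivAt_matrix_iff.1 h i j).unique <| by
    simpa only [hf _ hij] using hasDerivAt_const t (0 : 𝕜)

variable [Fintype m] [DecidableEq m] {Q : 𝕜 → Matrix m m 𝕜} {Q' : Matrix m m 𝕜}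

theorem HasDerivAt.transpose_mul_transpose_eq_neg (hQ' : HasDerivAt Q Q' t)
    (hQ : ∀ s, Q s * (Q s)ᵀ = 1) : (Q' * (Q t)ᵀ)ᵀ = -(Q' * (Q t)ᵀ) := by
  have hconst : HasDerivAt (fun s => Q s * (Q s)ᵀ) 0 t := by
    rw [funext hQ]
    exact hasDerivAt_const t 1
  rw [transpose_mul, transpose_transpose]
  exact eq_neg_of_add_eq_zero_right <| (hQ'.matrix_mul hQ'.matrix_transpose).unique hconst

theorem hasDerivAt_conj_of_orthogonal (hQ : ∀ s, Q s * (Q s)ᵀ = 1) (hQ' : HasDerivAt Q Q' t)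
    (L₀ : Matrix m m 𝕜) :
    HasDerivAt (fun s => Q s * L₀ * (Q s)ᵀ)
      (Q' * (Q t)ᵀ * (Q t * L₀ * (Q t)ᵀ) - Q t * L₀ * (Q t)ᵀ * (Q' * (Q t)ᵀ)) t := by
  convert (hQ'.matrix_mul (hasDerivAt_const t L₀)).matrix_mul hQ'.matrix_transpose using 1
  have hskew := hQ'.transpose_mul_transpose_eq_neg hQ
  set S := Q' * (Q t)ᵀ with hS
  have hQ'_eq : Q' = S * Q t := by
    rw [hS, Matrix.mul_assoc, mul_eq_one_comm.1 (hQ t), Matrix.mul_one]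
  rw [hQ'_eq, transpose_mul, hskew]
  simp only [Matrix.mul_assoc, Matrix.mul_neg, Matrix.mul_zero, add_zero, sub_eq_add_neg]

end Derivatives

open scoped Matrix.Norms.Elementwise in
theorem Mproj_conj_eq_of_exp_eq_mul {n : ℕ} {A : Matrix (Fin n) (Fin n) ℝ}
    {R Q : ℝ → Matrix (Fin n) (Fin n) ℝ} {R' Q' : Matrix (Fin n) (Fin n) ℝ} {t : ℝ}
    (hdec : ∀ s : ℝ, NormedSpace.exp (s • A) = R s * Q s) (hR : ∀ s, (R s).IsLowerTriangular)
    (hRunit : IsUnit (R t).det) (hQ : ∀ s, Q s * (Q s)ᵀ = 1)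
    (hR' : HasDerivAt R R' t) (hQ' : HasDerivAt Q Q' t) :
    Mproj (Q t * A * (Q t)ᵀ) = Q' * (Q t)ᵀ := by
  have hexp : HasDerivAt (fun s => R s * Q s) (R t * Q t * A) t := by
    rw [← funext hdec, ← hdec t]
    exact hasDerivAt_matrix_iff.2 (hasDerivAt_exp_smul_matrix_apply A t)
  have hT : ((R t)⁻¹ * R').IsLowerTriangular := by
    have := (R t).invertibleOfIsUnitDet hRunit
    exact (blockTriangular_inv_of_blockTriangular (hR t)).mul (hR'.blockTriangular hR)
  rw [conj_eq_inv_mul_add_mul_transpose (hQ t) hRunit ((hR'.matrix_mul hQ').unique hexp)]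
  exact Mproj_add_of_isLowerTriangular hT (hQ'.transpose_mul_transpose_eq_neg hQ)

/-- QR-decomposition solution of the Lax flow `dL/dt = [M(τ(L)), L]` for a `G`-equivariant
matrix-valued map `τ` on symmetric matrices: if `exp(t τ(L₀)) = R(t) Q(t)` with `R(t)`
invertible lower-triangular and `Q(t) ∈ G` orthogonal, then `L(t) = Q(t) L₀ Q(t)⁻¹` solves
the Lax equation with `L(0) = L₀`. -/
theorem stmt14 {n : ℕ}
    (G : Set (Matrix (Fin n) (Fin n) ℝ))
    (hG : ∀ Q ∈ G, Q * Q.transpose = 1)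
    (τ : Matrix (Fin n) (Fin n) ℝ → Matrix (Fin n) (Fin n) ℝ)
    (hτ : ∀ Q ∈ G, ∀ L : Matrix (Fin n) (Fin n) ℝ, L.transpose = L →
      τ (Q * L * Q.transpose) = Q * τ L * Q.transpose)
    (L₀ : Matrix (Fin n) (Fin n) ℝ) (hL₀ : L₀.transpose = L₀)
    (R Q : ℝ → Matrix (Fin n) (Fin n) ℝ)
    (hdec : ∀ t : ℝ, NormedSpace.exp (t • τ L₀) = R t * Q t)
    (hR : ∀ t, ∀ i j : Fin n, i < j → R t i j = 0)
    (hRunit : ∀ t, IsUnit (R t).det)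
    (hQG : ∀ t, Q t ∈ G)
    (hQ0 : Q 0 = 1)
    (R' Q' : ℝ → Matrix (Fin n) (Fin n) ℝ)
    (hdR : ∀ t (i j : Fin n), HasDerivAt (fun s => R s i j) (R' t i j) t)
    (hdQ : ∀ t (i j : Fin n), HasDerivAt (fun s => Q s i j) (Q' t i j) t) :
    Q 0 * L₀ * (Q 0)⁻¹ = L₀ ∧
    ∀ t (i j : Fin n), HasDerivAt (fun s => (Q s * L₀ * (Q s)⁻¹) i j)
      ((Mproj (τ (Q t * L₀ * (Q t)⁻¹)) * (Q t * L₀ * (Q t)⁻¹)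
        - (Q t * L₀ * (Q t)⁻¹) * Mproj (τ (Q t * L₀ * (Q t)⁻¹))) i j) t := by
  have hQ : ∀ s, Q s * (Q s)ᵀ = 1 := fun s => hG _ (hQG s)
  have hQinv : ∀ s, (Q s)⁻¹ = (Q s)ᵀ := fun s => inv_eq_right_inv (hQ s)
  refine ⟨by simp [hQ0], fun t => ?_⟩
  have hR' : HasDerivAt R (R' t) t := hasDerivAt_matrix_iff.2 (hdR t)
  have hQ' : HasDerivAt Q (Q' t) t := hasDerivAt_matrix_iff.2 (hdQ t)
  have hM : Mproj (τ (Q t * L₀ * (Q t)ᵀ)) = Q' t * (Q t)ᵀ := by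
    rw [hτ _ (hQG t) L₀ hL₀]
    exact Mproj_conj_eq_of_exp_eq_mul hdec (fun s i j => hR s i j) (hRunit t) hQ hR' hQ'
  simp only [hQinv, hM]
  exact hasDerivAt_matrix_iff.1 (hasDerivAt_conj_of_orthogonal hQ hQ' L₀)
end

section
/- For the classical Toda case τ(L) = L: if exp(t L₀) = R(t) Q(t) is the decomposition with R(t) lower-triangular and Q(t) orthogonal, then L(t) = Q(t) L₀ Q(t)ᵀ satisfies dL/dt = [M(L), L] with L(0) = L₀, where for symmetric L, M(L) = L₊ − L₊ᵀ with L₊ the strictly upper-triangular part of L. -/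
/-!
Differentiating `exp (t L₀) = R Q` gives `L₀ R Q = R' Q + R Q'`. Write `L = Q L₀ Qᵀ` and
`A = Q' Qᵀ`; `A` is skew-symmetric because `Q` is orthogonal. Since `R Q` commutes with `L₀`,
multiplying on the right by `Qᵀ` gives `R (L - A) = R'`, so `L - A = R⁻¹ R'` is lower triangular.
A skew-symmetric matrix differing from `L` by a lower-triangular one is `Mproj L`, and `Q' = A Q`
turns the derivative of `Q L₀ Qᵀ` into `A L - L A`.
-/

open NormedSpace Matrix

section EntrywiseDeriv

variable {m n p : Type*}

def HasEntrywiseDerivAt (F : ℝ → Matrix m n ℝ) (F' : Matrix m n ℝ) (t : ℝ) : Prop :=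
  ∀ i j, HasDerivAt (fun s => F s i j) (F' i j) t

variable {F G : ℝ → Matrix m n ℝ} {F' G' : Matrix m n ℝ} {t : ℝ}

theorem hasEntrywiseDerivAt_const (X : Matrix m n ℝ) (t : ℝ) :
    HasEntrywiseDerivAt (fun _ => X) 0 t :=
  fun i j => hasDerivAt_const t (X i j)

theorem HasEntrywiseDerivAt.unique (hF : HasEntrywiseDerivAt F F' t)
    (hG : HasEntrywiseDerivAt F G' t) : F' = G' :=
  Matrix.ext fun i j => (hF i j).unique (hG i j)

theorem HasEntrywiseDerivAt.transpose (hF : HasEntrywiseDerivAt F F' t) :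
    HasEntrywiseDerivAt (fun s => (F s)ᵀ) F'ᵀ t :=
  fun i j => hF j i

theorem HasEntrywiseDerivAt.mul [Fintype n] {G : ℝ → Matrix n p ℝ} {G' : Matrix n p ℝ}
    (hF : HasEntrywiseDerivAt F F' t) (hG : HasEntrywiseDerivAt G G' t) :
    HasEntrywiseDerivAt (fun s => F s * G s) (F' * G t + F t * G') t := by
  intro i j
  simpa only [mul_apply, Matrix.add_apply, Pi.mul_apply, ← Finset.sum_add_distrib] using
    HasDerivAt.fun_sum (u := Finset.univ) fun k _ => (hF i k).mul (hG k j)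

theorem HasEntrywiseDerivAt.blockTriangular {α : Type*} [LT α] {F : ℝ → Matrix m m ℝ}
    {F' : Matrix m m ℝ} {b : m → α} (hF : HasEntrywiseDerivAt F F' t)
    (hb : ∀ s, (F s).BlockTriangular b) : F'.BlockTriangular b := fun i j hij =>
  (hF i j).unique <| by simpa only [hb _ hij] using hasDerivAt_const t (0 : ℝ)

theorem hasEntrywiseDerivAt_exp_smul [Fintype m] [DecidableEq m] (A : Matrix m m ℝ) (t : ℝ) :
    HasEntrywiseDerivAt (fun s => exp (s • A)) (A * exp (t • A)) t := fun i j => by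
  open scoped Norms.Operator in
  exact hasDerivAt_pi.1 (hasDerivAt_pi.1 (hasDerivAt_exp_smul_const' A t) i) j

end EntrywiseDeriv

section Orthogonal

variable {m : Type*} [Fintype m] {Q : ℝ → Matrix m m ℝ} {Q' A : Matrix m m ℝ} {t : ℝ}

theorem HasEntrywiseDerivAt.mul_transpose_skew_of_orthogonal [DecidableEq m]
    (hQ : ∀ s, Q s * (Q s)ᵀ = 1) (hd : HasEntrywiseDerivAt Q Q' t) :
    (Q' * (Q t)ᵀ)ᵀ = -(Q' * (Q t)ᵀ) := by
  have h := (hd.mul hd.transpose).unique <| by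
    simpa only [hQ] using hasEntrywiseDerivAt_const (1 : Matrix m m ℝ) t
  rw [transpose_mul, transpose_transpose]
  exact eq_neg_of_add_eq_zero_right h

theorem HasEntrywiseDerivAt.mul_mul_transpose_of_skew (hd : HasEntrywiseDerivAt Q (A * Q t) t)
    (hA : Aᵀ = -A) (X : Matrix m m ℝ) :
    HasEntrywiseDerivAt (fun s => Q s * X * (Q s)ᵀ)
      (A * (Q t * X * (Q t)ᵀ) - Q t * X * (Q t)ᵀ * A) t := by
  convert (hd.mul (hasEntrywiseDerivAt_const X t)).mul hd.transpose using 1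
  rw [transpose_mul, hA]
  noncomm_ring

end Orthogonal

section Triangular

variable {m α K : Type*} [Fintype m] [DecidableEq m] [LinearOrder α] [CommRing K]
  {b : m → α} {L₀ R R' Q Q' : Matrix m m K}

theorem blockTriangular_conj_sub_of_factorization_deriv (hR : R.BlockTriangular b)
    (hR' : R'.BlockTriangular b) (hRu : IsUnit R) (hQ : Q * Qᵀ = 1)
    (hcomm : Commute L₀ (R * Q)) (hd : L₀ * (R * Q) = R' * Q + R * Q') :
    (Q * L₀ * Qᵀ - Q' * Qᵀ).BlockTriangular b := by
  let := hRu.invertible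
  have hRL : R * (Q * L₀ * Qᵀ) = L₀ * R := calc
    R * (Q * L₀ * Qᵀ) = R * Q * L₀ * Qᵀ := by simp only [mul_assoc]
    _ = L₀ * R * (Q * Qᵀ) := by rw [← hcomm.eq]; simp only [mul_assoc]
    _ = L₀ * R := by rw [hQ, mul_one]
  have hLR : L₀ * R = R' + R * (Q' * Qᵀ) := calc
    L₀ * R = L₀ * (R * Q) * Qᵀ := by rw [mul_assoc, mul_assoc, hQ, mul_one]
    _ = R' + R * (Q' * Qᵀ) := by rw [hd, add_mul, mul_assoc, hQ, mul_one, mul_assoc]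
  have hinv : ⅟R * R' = Q * L₀ * Qᵀ - Q' * Qᵀ := by
    rw [invOf_mul_eq_iff_eq_mul_left, mul_sub, hRL, hLR, add_sub_cancel_right]
  rw [← hinv, invOf_eq_nonsing_inv]
  exact (blockTriangular_inv_of_blockTriangular hR).mul hR'

end Triangular

theorem eq_Mproj_of_skew_of_lowerTriangular_sub {n : ℕ} {A L : Matrix (Fin n) (Fin n) ℝ}
    (hA : Aᵀ = -A) (hL : (L - A).BlockTriangular OrderDual.toDual) : A = Mproj L := by
  have hskew : ∀ i j, A i j = -A j i := fun i j => by
    simpa using congrFun (congrFun hA j) i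
  have hupper : ∀ {i j}, i < j → A i j = L i j := fun {i j} hij => by
    simpa [sub_eq_zero, eq_comm] using hL (show OrderDual.toDual j < OrderDual.toDual i from hij)
  ext i j
  rcases lt_trichotomy i j with hij | rfl | hij
  · simp [Mproj, hij, hupper hij]
  · simp only [Mproj, of_apply, lt_irrefl, if_false]
    linarith [hskew i i]
  · simp [Mproj, hij, not_lt.2 hij.le, hskew i j, hupper hij]

theorem stmt15_general {n : ℕ}
    (L₀ : Matrix (Fin n) (Fin n) ℝ)
    (R Q : ℝ → Matrix (Fin n) (Fin n) ℝ)
    (hdec : ∀ t : ℝ, NormedSpace.exp (t • L₀) = R t * Q t)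
    (hR : ∀ t, ∀ i j : Fin n, i < j → R t i j = 0)
    (hQ : ∀ t, Q t * (Q t).transpose = 1)
    (hQ0 : Q 0 = 1)
    (R' Q' : ℝ → Matrix (Fin n) (Fin n) ℝ)
    (hdR : ∀ t (i j : Fin n), HasDerivAt (fun s => R s i j) (R' t i j) t)
    (hdQ : ∀ t (i j : Fin n), HasDerivAt (fun s => Q s i j) (Q' t i j) t) :
    Q 0 * L₀ * (Q 0).transpose = L₀ ∧
    ∀ t (i j : Fin n), HasDerivAt (fun s => (Q s * L₀ * (Q s).transpose) i j)
      ((Mproj (Q t * L₀ * (Q t).transpose) * (Q t * L₀ * (Q t).transpose)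
        - (Q t * L₀ * (Q t).transpose) * Mproj (Q t * L₀ * (Q t).transpose)) i j) t := by
  refine ⟨by simp [hQ0], fun t => ?_⟩
  have hRd : HasEntrywiseDerivAt R (R' t) t := hdR t
  have hQd : HasEntrywiseDerivAt Q (Q' t) t := hdQ t
  set A := Q' t * (Q t)ᵀ
  have hAskew : Aᵀ = -A := hQd.mul_transpose_skew_of_orthogonal hQ
  have hQA : HasEntrywiseDerivAt Q (A * Q t) t := by
    rwa [mul_assoc, mul_eq_one_comm.mp (hQ t), mul_one]
  have hRQ : HasEntrywiseDerivAt (fun s => R s * Q s) (L₀ * (R t * Q t)) t := by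
    simpa only [hdec] using hasEntrywiseDerivAt_exp_smul L₀ t
  have hcomm : Commute L₀ (R t * Q t) := hdec t ▸ ((Commute.refl L₀).smul_right t).exp_right
  have hRu : IsUnit (R t) :=
    (IsUnit.mul_right_iff (IsUnit.of_mul_eq_one _ (hQ t))).mp (hdec t ▸ isUnit_exp _)
  have hlower : (Q t * L₀ * (Q t)ᵀ - A).BlockTriangular OrderDual.toDual :=
    blockTriangular_conj_sub_of_factorization_deriv (hR t) (hRd.blockTriangular hR) hRu (hQ t)
      hcomm (hRQ.unique (hRd.mul hQd))
  rw [← eq_Mproj_of_skew_of_lowerTriangular_sub hAskew hlower]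
  exact hQA.mul_mul_transpose_of_skew hAskew L₀

/-- QR-decomposition solution of the classical full symmetric Toda flow: if
`exp(t L₀) = R(t) Q(t)` with `R(t)` lower-triangular with positive diagonal and `Q(t)`
orthogonal, then `L(t) = Q(t) L₀ Q(t)ᵀ` solves `dL/dt = [M(L), L]` with `L(0) = L₀`. -/
theorem stmt15 {n : ℕ}
    (L₀ : Matrix (Fin n) (Fin n) ℝ) (hL₀ : L₀.transpose = L₀)
    (R Q : ℝ → Matrix (Fin n) (Fin n) ℝ)
    (hdec : ∀ t : ℝ, NormedSpace.exp (t • L₀) = R t * Q t)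
    (hR : ∀ t, ∀ i j : Fin n, i < j → R t i j = 0)
    (hRdiag : ∀ t (i : Fin n), 0 < R t i i)
    (hQ : ∀ t, Q t * (Q t).transpose = 1)
    (hQ0 : Q 0 = 1)
    (R' Q' : ℝ → Matrix (Fin n) (Fin n) ℝ)
    (hdR : ∀ t (i j : Fin n), HasDerivAt (fun s => R s i j) (R' t i j) t)
    (hdQ : ∀ t (i j : Fin n), HasDerivAt (fun s => Q s i j) (Q' t i j) t) :
    Q 0 * L₀ * (Q 0).transpose = L₀ ∧
    ∀ t (i j : Fin n), HasDerivAt (fun s => (Q s * L₀ * (Q s).transpose) i j)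
      ((Mproj (Q t * L₀ * (Q t).transpose) * (Q t * L₀ * (Q t).transpose)
        - (Q t * L₀ * (Q t).transpose) * Mproj (Q t * L₀ * (Q t).transpose)) i j) t :=
  stmt15_general L₀ R Q hdec hR hQ hQ0 R' Q' hdR hdQ
end

section
/- Let N ⊂ GL_n(ℝ) be the group of lower-triangular unipotent matrices. Then for any n ∈ N and any n×n matrix L, the minor on rows 1,…,k−1 and columns n−k+2,…,n is conjugation-invariant: det((n L n⁻¹)_{rows 1..k−1, cols n−k+2..n}) = det(L_{rows 1..k−1, cols n−k+2..n}). -/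
/-- The scalar `C_k(L)`: the `(k−1)×(k−1)` minor of `L` on rows `1,…,k−1` and columns
`n−k+2,…,n` (0-indexed: rows `0,…,k−2`, columns `n−k+1,…,n−1`). -/
noncomputable def Ck {n : ℕ} (k : ℕ) (hk : 1 ≤ k) (hkn : k ≤ n)
    (L : Matrix (Fin n) (Fin n) ℝ) : ℝ :=
  Matrix.det (Matrix.of fun a b : Fin (k - 1) =>
    L (⟨a.val, by have := a.isLt; omega⟩ : Fin n)
      (⟨n - k + 1 + b.val, by have := b.isLt; omega⟩ : Fin n))

lemma sum_restrict {m n : ℕ} (e : Fin m ↪ Fin n) (f : Fin n → ℝ)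
    (h : ∀ i, (∀ a, e a ≠ i) → f i = 0) : ∑ i, f i = ∑ a, f (e a) := by
  rw [← Finset.sum_map Finset.univ e f]
  refine (Finset.sum_subset (Finset.subset_univ _) ?_).symm
  intro i _ hi
  refine h i fun a hea => hi ?_
  rw [Finset.mem_map]
  exact ⟨a, Finset.mem_univ a, hea⟩

def rEmb {n : ℕ} (k : ℕ) (hkn : k ≤ n) : Fin (k - 1) ↪ Fin n :=
  ⟨fun a => ⟨a.val, by have := a.isLt; omega⟩, fun a b hab => by
    apply Fin.ext; simpa [Fin.ext_iff] using hab⟩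

def cEmb {n : ℕ} (k : ℕ) (hkn : k ≤ n) : Fin (k - 1) ↪ Fin n :=
  ⟨fun b => ⟨n - k + 1 + b.val, by have := b.isLt; omega⟩, fun a b hab => by
    apply Fin.ext; have := (Fin.ext_iff.mp hab); simp at this; omega⟩

@[simp] lemma rEmb_val {n k : ℕ} (hkn : k ≤ n) (a : Fin (k - 1)) :
    (rEmb k hkn a : Fin n).val = a.val := rfl

@[simp] lemma cEmb_val {n k : ℕ} (hkn : k ≤ n) (b : Fin (k - 1)) :
    (cEmb k hkn b : Fin n).val = n - k + 1 + b.val := rfl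

/-- The minor `C_k` is invariant under conjugation by lower-triangular unipotent
matrices. -/
theorem stmt19 {n k : ℕ} (hk : 1 ≤ k) (hkn : k ≤ n)
    (g L : Matrix (Fin n) (Fin n) ℝ)
    (hgd : ∀ i, g i i = 1) (hgu : ∀ i j : Fin n, i < j → g i j = 0) :
    Ck k hk hkn (g * L * g⁻¹) = Ck k hk hkn L := by
  have hg_tri : g.BlockTriangular OrderDual.toDual := by
    intro i j hij
    exact hgu i j hij
  have hdet : g.det = 1 := by
    rw [Matrix.det_of_lowerTriangular g hg_tri]
    simp [hgd]
  haveI : Invertible g := g.invertibleOfIsUnitDet (by rw [hdet]; exact isUnit_one)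
  have hinv_tri : g⁻¹.BlockTriangular OrderDual.toDual :=
    Matrix.blockTriangular_inv_of_blockTriangular hg_tri
  have hinvu : ∀ i j : Fin n, i < j → g⁻¹ i j = 0 := fun i j hij => hinv_tri hij
  have hinvd : ∀ i : Fin n, g⁻¹ i i = 1 := by
    intro i
    have h1 : (g⁻¹ * g) i i = 1 := by
      rw [Matrix.nonsing_inv_mul g (by rw [hdet]; exact isUnit_one)]; simp
    rw [Matrix.mul_apply] at h1
    rw [Finset.sum_eq_single i] at h1
    · rw [hgd i, mul_one] at h1; exact h1
    · intro j _ hj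
      rcases lt_or_gt_of_ne hj with h | h
      · rw [hgu j i h, mul_zero]
      · rw [hinvu i j h, zero_mul]
    · intro h; exact absurd (Finset.mem_univ i) h
  set r : Fin (k - 1) ↪ Fin n := rEmb k hkn
  set c : Fin (k - 1) ↪ Fin n := cEmb k hkn
  have key : (Matrix.of fun a b : Fin (k-1) => (g * L * g⁻¹) (r a) (c b)) =
      (Matrix.of fun a b : Fin (k-1) => g (r a) (r b)) *
      (Matrix.of fun a b : Fin (k-1) => L (r a) (c b)) *
      (Matrix.of fun a b : Fin (k-1) => g⁻¹ (c a) (c b)) := by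
    ext a b
    simp only [Matrix.mul_apply, Matrix.of_apply]
    rw [sum_restrict c (fun j => (∑ i, g (r a) i * L i j) * g⁻¹ j (c b)) ?_]
    · refine Finset.sum_congr rfl fun j _ => ?_
      congr 1
      rw [sum_restrict r (fun i => g (r a) i * L i (c j)) ?_]
      intro i hi
      have hlt : (r a : Fin n) < i := by
        rw [Fin.lt_def, rEmb_val]
        by_contra hle
        push_neg at hle
        have hik : i.val < k - 1 := by have := a.isLt; omega
        exact hi ⟨i.val, hik⟩ (by apply Fin.ext; rfl)
      show g (r a) i * L i (c j) = 0
      rw [hgu _ _ hlt, zero_mul]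
    · intro j hj
      have hlt : j < (c b : Fin n) := by
        rw [Fin.lt_def, cEmb_val]
        by_contra hle
        push_neg at hle
        have hjk : j.val - (n - k + 1) < k - 1 := by have := j.isLt; have := b.isLt; omega
        have hge : n - k + 1 ≤ j.val := by have := b.isLt; omega
        exact hj ⟨j.val - (n - k + 1), hjk⟩ (by apply Fin.ext; show n - k + 1 + (j.val - (n - k + 1)) = j.val; omega)
      show (∑ i, g (r a) i * L i j) * g⁻¹ j (c b) = 0
      rw [hinvu _ _ hlt, mul_zero]
  have detg1 : (Matrix.of fun a b : Fin (k-1) => g (r a) (r b)).det = 1 := by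
    rw [Matrix.det_of_lowerTriangular _ (fun a b hab => ?_)]
    · simp [hgd]
    · show g (r a) (r b) = 0
      apply hgu
      rw [Fin.lt_def, rEmb_val, rEmb_val]
      exact (show (a : ℕ) < b from hab)
  have detg2 : (Matrix.of fun a b : Fin (k-1) => g⁻¹ (c a) (c b)).det = 1 := by
    rw [Matrix.det_of_lowerTriangular _ (fun a b hab => ?_)]
    · simp [hinvd]
    · show g⁻¹ (c a) (c b) = 0
      apply hinvu
      rw [Fin.lt_def, cEmb_val, cEmb_val]
      have : (a : ℕ) < b := hab
      omega
  show (Matrix.of fun a b : Fin (k-1) => (g * L * g⁻¹) (r a) (c b)).det =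
      (Matrix.of fun a b : Fin (k-1) => L (r a) (c b)).det
  rw [key, Matrix.det_mul, Matrix.det_mul, detg1, detg2, one_mul, mul_one]
end
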